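/- arXiv:1511.07498 — 4 statements merged into one kernel-verified Lean document; each statement's English description precedes it below -/
import Mathlib

section
/- Let c > 0, a > 0 and y₀ > a/c, and let T ≥ (1/a)·ln(c·y₀/(c·y₀ − a)). Then there is no differentiable function y : ℝ → ℝ with y(0) = y₀ satisfying y'(t) ≥ c·y(t)² − a·y(t) for all t ∈ [0, T]. (Equivalently: any solution of the differential inequality y' ≥ cy² − ay with initial data y₀ > a/c blows up in finite time, no later than (1/a)ln(cy₀/(cy₀ − a)).) -/
/-!
Along `[0, T]` the solution never drops below `y₀`: at a time where `y = y₀` its derivative is at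
least `c y₀² - a y₀ > 0`. So `y` stays positive, and `1 / y` satisfies the linear inequality
`(1/y)' ≤ a/y - c`; hence `e^{-at} (a / y - c)` is nonincreasing. Its value `a / y₀ - c` at `0`
equals the value of `e^{-at} (-c)` at the blow-up time `T₁ = (1/a) ln(c y₀ / (c y₀ - a))`, which
forces `a / y(T₁) ≤ 0`, a contradiction.
-/

open Real Set

theorem le_apply_of_comp_le_deriv {y g : ℝ → ℝ} {s T : ℝ} (hy : Differentiable ℝ y)
    (hg : 0 < g (y s)) (h : ∀ t ∈ Ico s T, g (y t) ≤ deriv y t) :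
    ∀ t ∈ Icc s T, y s ≤ y t :=
  image_le_of_deriv_right_lt_deriv_boundary continuousOn_const
    (fun _ _ => hasDerivWithinAt_const _ _ _) le_rfl (fun t => (hy t).hasDerivAt)
    fun t ht hyt => (hyt ▸ hg).trans_le (h t ht)

theorem hasDerivAt_exp_neg_mul_mul_div_sub {y : ℝ → ℝ} {a c t : ℝ}
    (hy : DifferentiableAt ℝ y t) (hyt : y t ≠ 0) :
    HasDerivAt (fun t => exp (-a * t) * (a / y t - c))
      (exp (-a * t) * (-a) * (a / y t - c) + exp (-a * t) * (a * (-deriv y t / y t ^ 2))) t := by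
  have hexp : HasDerivAt (fun t => exp (-a * t)) (exp (-a * t) * (-a)) t := by
    simpa using ((hasDerivAt_id t).const_mul (-a)).exp
  have hinv := (hy.hasDerivAt.fun_inv hyt).const_mul a
  simp only [← div_eq_mul_inv] at hinv
  exact hexp.mul (hinv.sub_const c)

theorem antitoneOn_exp_neg_mul_mul_div_sub {y : ℝ → ℝ} {a c : ℝ} {D : Set ℝ} (ha : 0 ≤ a)
    (hD : Convex ℝ D) (hy : Differentiable ℝ y) (hy0 : ∀ t ∈ D, y t ≠ 0)
    (h : ∀ t ∈ interior D, c * y t ^ 2 - a * y t ≤ deriv y t) :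
    AntitoneOn (fun t => exp (-a * t) * (a / y t - c)) D := by
  have hderiv : ∀ t ∈ D, HasDerivAt (fun t => exp (-a * t) * (a / y t - c)) _ t :=
    fun t ht => hasDerivAt_exp_neg_mul_mul_div_sub (c := c) (hy t) (hy0 t ht)
  refine antitoneOn_of_deriv_nonpos hD
    (fun t ht => (hderiv t ht).continuousAt.continuousWithinAt)
    (fun t ht => (hderiv t (interior_subset ht)).differentiableAt.differentiableWithinAt)
    (fun t ht => ?_)
  rw [(hderiv t (interior_subset ht)).deriv]
  have hyt := hy0 t (interior_subset ht)
  have hbound : a * (-deriv y t / y t ^ 2) ≤ a * (-(c * y t ^ 2 - a * y t) / y t ^ 2) :=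
    mul_le_mul_of_nonneg_left
      (div_le_div_of_nonneg_right (neg_le_neg (h t ht)) (sq_nonneg _)) ha
  -- the quantity is constant along solutions of `Y' = c Y² - a Y`
  have hzero : -a * (a / y t - c) + a * (-(c * y t ^ 2 - a * y t) / y t ^ 2) = 0 := by
    field_simp
    ring
  have := mul_le_mul_of_nonneg_left hbound (exp_pos (-a * t)).le
  linear_combination this + exp (-a * t) * hzero

/-- Any solution of the differential inequality `y' ≥ c y² − a y` with
initial data `y₀ > a/c` blows up no later than `(1/a) ln(c y₀/(c y₀ − a))`. -/
theorem stmt_1 (c a y₀ T : ℝ) (hc : 0 < c) (ha : 0 < a) (hy₀ : a / c < y₀)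
    (hT : (1 / a) * Real.log (c * y₀ / (c * y₀ - a)) ≤ T) :
    ¬ ∃ y : ℝ → ℝ, Differentiable ℝ y ∧ y 0 = y₀ ∧
      ∀ t ∈ Set.Icc (0 : ℝ) T, c * (y t) ^ 2 - a * y t ≤ deriv y t := by
  rintro ⟨y, hy, hy0, hineq⟩
  set T₁ := (1 / a) * log (c * y₀ / (c * y₀ - a))
  have hcy : a < c * y₀ := (div_lt_iff₀' hc).mp hy₀
  have hy₀pos : 0 < y₀ := (div_pos ha hc).trans hy₀
  have hratio : 1 < c * y₀ / (c * y₀ - a) := by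
    rw [one_lt_div (by linarith)]
    linarith
  have hT₁ : 0 ≤ T₁ := by have := log_pos hratio; positivity
  have hexp : exp (-a * T₁) = (c * y₀ / (c * y₀ - a))⁻¹ := by
    rw [show -a * T₁ = -log (c * y₀ / (c * y₀ - a)) by simp only [T₁]; field_simp, exp_neg,
      exp_log (by linarith)]
  have hge : ∀ t ∈ Icc 0 T, y₀ ≤ y t := hy0 ▸
    le_apply_of_comp_le_deriv (g := fun x => c * x ^ 2 - a * x) hy (by rw [hy0]; nlinarith)
      fun t ht => hineq t (Ico_subset_Icc_self ht)
  have hanti := antitoneOn_exp_neg_mul_mul_div_sub ha.le (convex_Icc 0 T) hy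
    (fun t ht => (hy₀pos.trans_le (hge t ht)).ne') fun t ht => hineq t (interior_subset ht)
  have key := hanti ⟨le_rfl, hT₁.trans hT⟩ ⟨hT₁, hT⟩ hT₁
  simp only [hexp, mul_zero, exp_zero, one_mul, hy0] at key
  have hyT₁ : 0 < a / y T₁ := div_pos ha (hy₀pos.trans_le (hge T₁ ⟨hT₁, hT⟩))
  have hrhs : a / y₀ - c = (c * y₀ / (c * y₀ - a))⁻¹ * -c := by
    field_simp
    ring
  rw [hrhs] at key
  have := mul_pos (inv_pos.2 (zero_lt_one.trans hratio)) hyT₁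
  linarith
end

section
/- (Theorem 2.3, non-delayed blow-up.) Let r, K, ω, D, d, c, ω₁, D₁ be positive reals and δ₁ ∈ (0, c) with ω₁/(c − δ₁) − D₁ > 0. Let X₀, Y₀ be positive reals with X₀ ≤ K, X₀ > ω₁/(c − δ₁) − D₁, and satisfying the largeness condition Y₀·ln( X₀ / (ω₁/(c − δ₁) − D₁) ) > ω/δ₁. Set T* = 1/(δ₁·Y₀). Then there exist no differentiable functions X, Y : ℝ → ℝ with X(0) = X₀, Y(0) = Y₀, X(t) > 0 and Y(t) > 0 for all t ∈ [0, T*], satisfying for all t ∈ [0, T*] the system X'(t) = r·X(t)·(1 − X(t)/K) − ω·X(t)·Y(t)/(D + d·X(t) + Y(t)) and Y'(t) = c·Y(t)² − ω₁·Y(t)²/(X(t) + D₁). In other words, any such solution blows up at some finite time T ≤ 1/(δ₁Y₀). -/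
open Set Real

/-!
Wherever the prey `X` touches the barrier `X₀ e^{-ωt}` we have `X ≤ X₀ ≤ K`, so the logistic term
is nonnegative, and the functional response `ωXY/(D + dX + Y)` is below `ωX`; hence `X' > -ωX`
there and `X` never crosses below the barrier. The largeness condition says exactly that
`X₀ e^{-ωT*}` is still above the threshold `ω₁/(c - δ₁) - D₁`, so on `[0, T*]` the predator obeys
`Y' ≥ δ₁ Y²`. Then `(1/Y)' ≤ -δ₁`, and `1/Y` reaches `0` by time `T* = 1/(δ₁ Y₀)`.
-/

lemma mul_exp_neg_le_of_touching {f f' : ℝ → ℝ} {T x₀ ω : ℝ}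
    (hf : ContinuousOn f (Icc 0 T)) (hf' : ∀ t ∈ Ico 0 T, HasDerivWithinAt f (f' t) (Ici t) t)
    (h0 : x₀ ≤ f 0) (htouch : ∀ t ∈ Ico 0 T, f t = x₀ * exp (-(ω * t)) → -(ω * f t) < f' t) :
    ∀ t ∈ Icc 0 T, x₀ * exp (-(ω * t)) ≤ f t := by
  have hB (t : ℝ) :
      HasDerivAt (fun s => x₀ * exp (-(ω * s))) (-(ω * (x₀ * exp (-(ω * t))))) t :=
    (((hasDerivAt_id t).const_mul ω).neg.exp.const_mul x₀).congr_deriv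
      (by simp only [Pi.neg_apply, id]; ring)
  refine fun t ht => image_le_of_deriv_right_lt_deriv_boundary'
    (fun s _ => (hB s).continuousAt.continuousWithinAt) (fun s _ => (hB s).hasDerivWithinAt)
    (by simpa using h0) hf hf' (fun s hs heq => ?_) ht
  rw [heq]
  exact htouch s hs heq.symm

lemma neg_mul_lt_prey_rate {r K ω D d x y : ℝ} (hr : 0 ≤ r) (hω : 0 < ω) (hD : 0 < D)
    (hd : 0 ≤ d) (hx : 0 < x) (hxK : x ≤ K) (hy : 0 ≤ y) :
    -(ω * x) < r * x * (1 - x / K) - ω * x * y / (D + d * x + y) := by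
  have hlogistic : 0 ≤ r * x * (1 - x / K) :=
    mul_nonneg (by positivity) (sub_nonneg.2 ((div_le_one (hx.trans_le hxK)).2 hxK))
  have hresponse : ω * x * y / (D + d * x + y) < ω * x := by
    rw [div_lt_iff₀ (by positivity)]
    nlinarith [mul_pos (mul_pos hω hx) (show 0 < D + d * x by positivity)]
  linarith

lemma prey_ge_mul_exp_neg {X Y : ℝ → ℝ} {r K ω D d T : ℝ} (hr : 0 ≤ r) (hω : 0 < ω)
    (hD : 0 < D) (hd : 0 ≤ d) (hXK : X 0 ≤ K) (hX : ∀ t ∈ Icc 0 T, 0 < X t)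
    (hY : ∀ t ∈ Icc 0 T, 0 ≤ Y t)
    (hX' : ∀ t ∈ Icc 0 T,
      HasDerivAt X (r * X t * (1 - X t / K) - ω * X t * Y t / (D + d * X t + Y t)) t) :
    ∀ t ∈ Icc 0 T, X 0 * exp (-(ω * t)) ≤ X t := by
  refine mul_exp_neg_le_of_touching (fun t ht => (hX' t ht).continuousAt.continuousWithinAt)
    (fun t ht => (hX' t (Ico_subset_Icc_self ht)).hasDerivWithinAt) le_rfl fun t ht hXt => ?_
  have ht' := Ico_subset_Icc_self ht
  refine neg_mul_lt_prey_rate hr hω hD hd (hX t ht') ?_ (hY t ht')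
  calc X t = X 0 * exp (-(ω * t)) := hXt
    _ ≤ X 0 := mul_le_of_le_one_right (hX 0 (left_mem_Icc.2 (ht.1.trans ht.2.le))).le
        (exp_le_one_iff.2 (neg_nonpos.2 (mul_nonneg hω.le ht.1)))
    _ ≤ K := hXK

lemma lt_mul_exp_neg_of_lt_log {a x s : ℝ} (ha : 0 < a) (hx : 0 < x) (hs : s < log (x / a)) :
    a < x * exp (-s) := by
  rw [lt_log_iff_exp_lt (by positivity), lt_div_iff₀ ha] at hs
  rw [exp_neg, ← div_eq_mul_inv, lt_div_iff₀ (exp_pos s)]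
  linarith

lemma lt_sub_div_add_of_div_sub_lt {c δ ω₁ D₁ x : ℝ} (hω₁ : 0 ≤ ω₁) (hδc : δ < c)
    (hx : ω₁ / (c - δ) - D₁ < x) : δ < c - ω₁ / (x + D₁) := by
  have hcδ : 0 < c - δ := sub_pos.2 hδc
  have hxD : ω₁ / (c - δ) < x + D₁ := by linarith
  have hxD₀ : 0 < x + D₁ := lt_of_le_of_lt (by positivity) hxD
  rw [div_lt_iff₀ hcδ] at hxD
  have : ω₁ / (x + D₁) < c - δ := by rw [div_lt_iff₀ hxD₀]; linarith
  linarith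

lemma inv_le_inv_sub_mul_of_sq_le_deriv {g g' : ℝ → ℝ} {T δ : ℝ}
    (hg : ContinuousOn g (Icc 0 T)) (hg' : ∀ t ∈ Ico 0 T, HasDerivWithinAt g (g' t) (Ici t) t)
    (hpos : ∀ t ∈ Icc 0 T, 0 < g t) (hgrowth : ∀ t ∈ Ico 0 T, δ * g t ^ 2 ≤ g' t) :
    ∀ t ∈ Icc 0 T, (g t)⁻¹ ≤ (g 0)⁻¹ - δ * t := by
  have hB (t : ℝ) : HasDerivAt (fun s => (g 0)⁻¹ - δ * s) (-δ) t := by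
    simpa using ((hasDerivAt_id t).const_mul δ).const_sub (g 0)⁻¹
  refine fun t ht => image_le_of_deriv_right_le_deriv_boundary
    (hg.inv₀ fun s hs => (hpos s hs).ne')
    (fun s hs => (hg' s hs).inv (hpos s (Ico_subset_Icc_self hs)).ne') (by simp)
    (fun s _ => (hB s).continuousAt.continuousWithinAt) (fun s _ => (hB s).hasDerivWithinAt)
    (fun s hs => ?_) ht
  rw [neg_div, neg_le_neg_iff, le_div_iff₀ (pow_pos (hpos s (Ico_subset_Icc_self hs)) 2)]
  exact hgrowth s hs

lemma exists_nonpos_of_sq_le_deriv {g g' : ℝ → ℝ} {δ : ℝ} (hδ : 0 < δ) (hg0 : 0 < g 0)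
    (hg : ContinuousOn g (Icc 0 (1 / (δ * g 0))))
    (hg' : ∀ t ∈ Ico 0 (1 / (δ * g 0)), HasDerivWithinAt g (g' t) (Ici t) t)
    (hgrowth : ∀ t ∈ Ico 0 (1 / (δ * g 0)), δ * g t ^ 2 ≤ g' t) :
    ∃ t ∈ Icc 0 (1 / (δ * g 0)), g t ≤ 0 := by
  by_contra! hpos
  have hT : 1 / (δ * g 0) ∈ Icc 0 (1 / (δ * g 0)) := right_mem_Icc.2 (by positivity)
  have hbound := inv_le_inv_sub_mul_of_sq_le_deriv hg hg' hpos hgrowth _ hT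
  have hzero : (g 0)⁻¹ - δ * (1 / (δ * g 0)) = 0 := by field_simp; ring
  linarith [inv_pos.2 (hpos _ hT)]

theorem stmt_5_general (r K ω D d c ω₁ D₁ δ₁ X₀ Y₀ : ℝ)
    (hr : 0 < r) (hω : 0 < ω) (hD : 0 < D) (hd : 0 < d)
    (hω₁ : 0 < ω₁)
    (hδ₁ : 0 < δ₁) (hδ₁c : δ₁ < c)
    (hthr : 0 < ω₁ / (c - δ₁) - D₁)
    (hX₀ : 0 < X₀) (hY₀ : 0 < Y₀) (hX₀K : X₀ ≤ K)
    (hlarge : ω / δ₁ < Y₀ * Real.log (X₀ / (ω₁ / (c - δ₁) - D₁))) :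
    ¬ ∃ X Y : ℝ → ℝ, X 0 = X₀ ∧ Y 0 = Y₀ ∧
      (∀ t ∈ Set.Icc (0 : ℝ) (1 / (δ₁ * Y₀)), 0 < X t ∧ 0 < Y t) ∧
      (∀ t ∈ Set.Icc (0 : ℝ) (1 / (δ₁ * Y₀)),
        HasDerivAt X (r * X t * (1 - X t / K) - ω * X t * Y t / (D + d * X t + Y t)) t ∧
        HasDerivAt Y (c * (Y t) ^ 2 - ω₁ * (Y t) ^ 2 / (X t + D₁)) t) := by
  rintro ⟨X, Y, rfl, rfl, hpos, hode⟩
  set T := 1 / (δ₁ * Y 0)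
  set a := ω₁ / (c - δ₁) - D₁
  have hprey : ∀ t ∈ Icc 0 T, X 0 * exp (-(ω * t)) ≤ X t := prey_ge_mul_exp_neg hr.le hω hD hd.le hX₀K (fun t ht => (hpos t ht).1)
    (fun t ht => (hpos t ht).2.le) fun t ht => (hode t ht).1
  have hthreshold : ∀ t ∈ Icc 0 T, a < X t := by
    have hωT : ω * T < log (X 0 / a) := by
      rw [show ω * T = ω / δ₁ / Y 0 by ring, div_lt_iff₀ hY₀]
      linarith
    intro t ht
    calc a < X 0 * exp (-(ω * T)) := lt_mul_exp_neg_of_lt_log hthr hX₀ hωT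
      _ ≤ X 0 * exp (-(ω * t)) := by gcongr; exact ht.2
      _ ≤ X t := hprey t ht
  have hpredator : ∀ t ∈ Ico 0 T, δ₁ * Y t ^ 2 ≤ c * Y t ^ 2 - ω₁ * Y t ^ 2 / (X t + D₁) := by
    intro t ht
    have hrate := lt_sub_div_add_of_div_sub_lt hω₁.le hδ₁c (hthreshold t (Ico_subset_Icc_self ht))
    calc δ₁ * Y t ^ 2 ≤ (c - ω₁ / (X t + D₁)) * Y t ^ 2 := by gcongr
      _ = c * Y t ^ 2 - ω₁ * Y t ^ 2 / (X t + D₁) := by ring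
  obtain ⟨t, ht, hYt⟩ := exists_nonpos_of_sq_le_deriv hδ₁ hY₀
    (fun t ht => (hode t ht).2.continuousAt.continuousWithinAt)
    (fun t ht => (hode t (Ico_subset_Icc_self ht)).2.hasDerivWithinAt) hpredator
  exact (hpos t ht).2.not_ge hYt

/-- Theorem 2.3 (non-delayed blow-up): under the largeness condition on the
initial data, no positive solution of the non-delayed predator–prey system
exists on `[0, 1/(δ₁ Y₀)]`; i.e. solutions blow up by time `1/(δ₁ Y₀)`. -/
theorem stmt_5 (r K ω D d c ω₁ D₁ δ₁ X₀ Y₀ : ℝ)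
    (hr : 0 < r) (hK : 0 < K) (hω : 0 < ω) (hD : 0 < D) (hd : 0 < d)
    (hc : 0 < c) (hω₁ : 0 < ω₁) (hD₁ : 0 < D₁)
    (hδ₁ : 0 < δ₁) (hδ₁c : δ₁ < c)
    (hthr : 0 < ω₁ / (c - δ₁) - D₁)
    (hX₀ : 0 < X₀) (hY₀ : 0 < Y₀) (hX₀K : X₀ ≤ K)
    (hX₀thr : ω₁ / (c - δ₁) - D₁ < X₀)
    (hlarge : ω / δ₁ < Y₀ * Real.log (X₀ / (ω₁ / (c - δ₁) - D₁))) :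
    ¬ ∃ X Y : ℝ → ℝ, X 0 = X₀ ∧ Y 0 = Y₀ ∧
      (∀ t ∈ Set.Icc (0 : ℝ) (1 / (δ₁ * Y₀)), 0 < X t ∧ 0 < Y t) ∧
      (∀ t ∈ Set.Icc (0 : ℝ) (1 / (δ₁ * Y₀)),
        HasDerivAt X (r * X t * (1 - X t / K) - ω * X t * Y t / (D + d * X t + Y t)) t ∧
        HasDerivAt Y (c * (Y t) ^ 2 - ω₁ * (Y t) ^ 2 / (X t + D₁)) t) :=
  stmt_5_general r K ω D d c ω₁ D₁ δ₁ X₀ Y₀ hr hω hD hd hω₁ hδ₁ hδ₁c hthr hX₀ hY₀ hX₀K hlarge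
end

section
/- (Theorem 2.1, blow-up in the delayed model.) Let r, K, ω, D, d, c, ω₁, D₁ be positive reals, τ > 0, and let X₀, Y₀ be positive with X₀ ≤ K. Fix t₁ > τ and M ≥ Y₀, set a = ω₁·M·e^{ω(t₁−τ)}/X₀, and assume c·Y₀ > a and t₁ ≥ (1/a)·ln( c·Y₀/(c·Y₀ − a) ). Then there exist no differentiable functions X, Y : ℝ → ℝ satisfying: (i) X(t) = X₀ and Y(t) = Y₀ for all t ∈ [−τ, 0] (constant history); (ii) for all t ∈ [0, t₁], X'(t) = r·X(t)·(1 − X(t)/K) − ω·X(t)·Y(t)/(D + d·X(t) + Y(t)) and Y'(t) = Y(t)·( c·Y(t) − ω₁·Y(t−τ)/(X(t−τ) + D₁) ); (iii) X(t) > 0 for all t ∈ [−τ, t₁] and 0 < Y(t) ≤ M for all t ∈ [−τ, t₁]. Consequently, for sufficiently large initial data Y cannot remain bounded on any such interval and solutions blow up in finite time; in particular the interior equilibrium of the delayed system is not globally asymptotically stable. -/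
/-!
Since the prey stays below `K` and the predation term is at most `ω X`, Grönwall gives
`X(t) ≥ X₀ e^{-ωt}`, so while `Y ≤ M` the delayed coefficient `ω₁ Y(t-τ)/(X(t-τ)+D₁)` is at most
`a`. Then `Y' ≥ c Y² - a Y`, and `Y` must blow up no later than the explicit solution of this
Bernoulli equation, i.e. by time `(1/a) ln(c Y₀/(c Y₀ - a)) ≤ t₁`.
-/

open Real Set

theorem le_gronwallBound_of_hasDerivAt {f f' : ℝ → ℝ} {δ K ε a b : ℝ}
    (hf : ∀ x ∈ Icc a b, HasDerivAt f (f' x) x) (ha : f a ≤ δ)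
    (bound : ∀ x ∈ Ico a b, f' x ≤ K * f x + ε) :
    ∀ x ∈ Icc a b, f x ≤ gronwallBound δ K ε (x - a) :=
  le_gronwallBound_of_liminf_deriv_right_le
    (fun x hx => (hf x hx).continuousAt.continuousWithinAt)
    (fun x hx _ hr =>
      (hf x (Ico_subset_Icc_self hx)).hasDerivWithinAt.liminf_right_slope_le hr)
    ha bound

theorem le_of_hasDerivAt_neg_of_eq {f f' : ℝ → ℝ} {K a b : ℝ}
    (hf : ∀ x ∈ Icc a b, HasDerivAt f (f' x) x) (ha : f a ≤ K)
    (hK : ∀ x ∈ Ico a b, f x = K → f' x < 0) :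
    ∀ x ∈ Icc a b, f x ≤ K :=
  image_le_of_deriv_right_lt_deriv_boundary
    (fun x hx => (hf x hx).continuousAt.continuousWithinAt)
    (fun x hx => (hf x (Ico_subset_Icc_self hx)).hasDerivWithinAt) ha
    (fun _ => hasDerivAt_const _ K) hK

/-- The time at which the solution of `y' = c y² - a y`, `y 0 = y₀`, blows up. -/
noncomputable def riccatiBlowUpTime (c a y₀ : ℝ) : ℝ := 1 / a * log (c * y₀ / (c * y₀ - a))

section Riccati

variable {c a y₀ : ℝ}

theorem riccatiBlowUpTime_nonneg (ha : 0 < a) (hay : a < c * y₀) :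
    0 ≤ riccatiBlowUpTime c a y₀ := by
  have : 1 ≤ c * y₀ / (c * y₀ - a) := by
    rw [le_div_iff₀ (by linarith)]; linarith
  unfold riccatiBlowUpTime
  exact mul_nonneg (by positivity) (log_nonneg this)

theorem gronwallBound_riccatiBlowUpTime (hy₀ : 0 < y₀) (ha : 0 < a) (hay : a < c * y₀) :
    gronwallBound y₀⁻¹ a (-c) (riccatiBlowUpTime c a y₀) = 0 := by
  have hexp : exp (a * riccatiBlowUpTime c a y₀) = c * y₀ / (c * y₀ - a) := by
    rw [riccatiBlowUpTime, ← mul_assoc, mul_one_div_cancel ha.ne', one_mul,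
      exp_log (div_pos (by linarith) (by linarith))]
  rw [gronwallBound_of_K_ne_0 ha.ne']
  dsimp only
  rw [hexp]
  have : c * y₀ - a ≠ 0 := by linarith
  rw [div_sub_one this]
  field_simp
  ring

/-- Comparison with `y' = c y² - a y`: since `1/y` satisfies `(1/y)' ≤ a (1/y) - c`, Grönwall
forces `1/y` to reach `0` by the blow-up time. -/
theorem lt_riccatiBlowUpTime {y q : ℝ → ℝ} {T : ℝ}
    (hy : ∀ t ∈ Icc 0 T, HasDerivAt y (y t * (c * y t - q t)) t)
    (hpos : ∀ t ∈ Icc 0 T, 0 < y t) (hq : ∀ t ∈ Icc 0 T, q t ≤ a)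
    (ha : 0 < a) (hay : a < c * y 0) :
    T < riccatiBlowUpTime c a (y 0) := by
  by_contra! hT
  have hT₀ := riccatiBlowUpTime_nonneg ha hay
  have hmem : riccatiBlowUpTime c a (y 0) ∈ Icc 0 T := ⟨hT₀, hT⟩
  have hinv : ∀ t ∈ Icc 0 T, HasDerivAt (fun s => (y s)⁻¹) (q t * (y t)⁻¹ - c) t := by
    intro t ht
    have hyt := (hpos t ht).ne'
    refine ((hy t ht).fun_inv hyt).congr_deriv ?_
    field_simp
    ring
  have hbound := le_gronwallBound_of_hasDerivAt hinv le_rfl (fun t ht => by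
    have ht' := Ico_subset_Icc_self ht
    show q t * (y t)⁻¹ - c ≤ a * (y t)⁻¹ + -c
    linarith [mul_le_mul_of_nonneg_right (hq t ht') (inv_nonneg.2 (hpos t ht').le)]) _ hmem
  rw [sub_zero, gronwallBound_riccatiBlowUpTime (hpos 0 ⟨le_rfl, hT₀.trans hT⟩) ha hay] at hbound
  exact absurd hbound (not_le.2 (inv_pos.2 (hpos _ hmem)))

end Riccati

noncomputable def preyRate (r K ω D d x y : ℝ) : ℝ :=
  r * x * (1 - x / K) - ω * x * y / (D + d * x + y)

section Prey

variable {r K ω D d : ℝ}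

theorem preyRate_self_neg {y : ℝ} (hK : 0 < K) (hω : 0 < ω) (hD : 0 ≤ D) (hd : 0 ≤ d)
    (hy : 0 < y) : preyRate r K ω D d K y < 0 := by
  rw [preyRate, div_self hK.ne', sub_self, mul_zero, zero_sub, neg_lt_zero]
  positivity

theorem neg_mul_le_preyRate {x y : ℝ} (hr : 0 ≤ r) (hω : 0 ≤ ω) (hD : 0 ≤ D) (hd : 0 ≤ d)
    (hx : 0 < x) (hxK : x ≤ K) (hy : 0 < y) : -ω * x ≤ preyRate r K ω D d x y := by
  have hlogistic : 0 ≤ r * x * (1 - x / K) :=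
    mul_nonneg (by positivity) (sub_nonneg.2 ((div_le_one (hx.trans_le hxK)).2 hxK))
  have hden : 0 < D + d * x + y := by positivity
  have hpredation : ω * x * y / (D + d * x + y) ≤ ω * x := by
    rw [div_le_iff₀ hden]
    nlinarith [mul_nonneg hω hx.le,
      mul_nonneg (mul_nonneg hω hx.le) (add_nonneg hD (mul_nonneg hd hx.le))]
  rw [preyRate]
  linarith

variable {X Y : ℝ → ℝ} {T : ℝ}

theorem prey_le_of_hasDerivAt (hK : 0 < K) (hω : 0 < ω) (hD : 0 ≤ D) (hd : 0 ≤ d)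
    (hX : ∀ t ∈ Icc 0 T, HasDerivAt X (preyRate r K ω D d (X t) (Y t)) t) (hX0 : X 0 ≤ K)
    (hY : ∀ t ∈ Icc 0 T, 0 < Y t) : ∀ t ∈ Icc 0 T, X t ≤ K :=
  le_of_hasDerivAt_neg_of_eq hX hX0 fun t ht hXt => by
    rw [hXt]
    exact preyRate_self_neg hK hω hD hd (hY t (Ico_subset_Icc_self ht))

theorem mul_exp_le_prey (hr : 0 ≤ r) (hω : 0 ≤ ω) (hD : 0 ≤ D) (hd : 0 ≤ d)
    (hX : ∀ t ∈ Icc 0 T, HasDerivAt X (preyRate r K ω D d (X t) (Y t)) t)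
    (hXpos : ∀ t ∈ Icc 0 T, 0 < X t) (hXK : ∀ t ∈ Icc 0 T, X t ≤ K)
    (hY : ∀ t ∈ Icc 0 T, 0 < Y t) : ∀ t ∈ Icc 0 T, X 0 * exp (-ω * t) ≤ X t := by
  intro t ht
  have := le_gronwallBound_of_hasDerivAt (f := fun s => -X s) (δ := -X 0) (K := -ω) (ε := 0)
    (fun s hs => (hX s hs).neg) le_rfl (fun s hs => by
      have hs' := Ico_subset_Icc_self hs
      have := neg_mul_le_preyRate hr hω hD hd (hXpos s hs') (hXK s hs') (hY s hs')
      linarith) t ht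
  rw [gronwallBound_ε0, sub_zero] at this
  linarith

end Prey

theorem delayed_lower_bound_of_history {X : ℝ → ℝ} {X₀ ω τ t₁ : ℝ} (hω : 0 ≤ ω) (hτ : 0 ≤ τ)
    (hτt₁ : τ ≤ t₁) (hX₀ : 0 ≤ X₀) (hinit : ∀ t ∈ Icc (-τ) 0, X t = X₀)
    (hlow : ∀ t ∈ Icc 0 t₁, X₀ * exp (-ω * t) ≤ X t) :
    ∀ t ∈ Icc 0 t₁, X₀ * exp (-ω * (t₁ - τ)) ≤ X (t - τ) := by
  intro t ht
  rcases le_or_gt (t - τ) 0 with h | h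
  · rw [hinit _ ⟨by linarith [ht.1], h⟩]
    exact mul_le_of_le_one_right hX₀ (exp_le_one_iff.2 (by nlinarith))
  · refine le_trans ?_ (hlow _ ⟨h.le, by linarith [ht.2]⟩)
    exact mul_le_mul_of_nonneg_left (exp_le_exp.2 (by nlinarith [ht.2])) hX₀

theorem stmt_7_general (r K ω D d c ω₁ D₁ τ X₀ Y₀ t₁ M a : ℝ)
    (hr : 0 < r) (hK : 0 < K) (hω : 0 < ω) (hD : 0 < D) (hd : 0 < d)
    (hω₁ : 0 < ω₁) (hD₁ : 0 < D₁) (hτ : 0 < τ)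
    (hX₀ : 0 < X₀) (hX₀K : X₀ ≤ K)
    (ht₁τ : τ < t₁)
    (ha : a = ω₁ * M * Real.exp (ω * (t₁ - τ)) / X₀)
    (hca : a < c * Y₀)
    (ht₁ : (1 / a) * Real.log (c * Y₀ / (c * Y₀ - a)) ≤ t₁) :
    ¬ ∃ X Y : ℝ → ℝ,
      (∀ t ∈ Set.Icc (-τ) (0 : ℝ), X t = X₀ ∧ Y t = Y₀) ∧
      (∀ t ∈ Set.Icc (0 : ℝ) t₁,
        HasDerivAt X (r * X t * (1 - X t / K) - ω * X t * Y t / (D + d * X t + Y t)) t ∧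
        HasDerivAt Y (Y t * (c * Y t - ω₁ * Y (t - τ) / (X (t - τ) + D₁))) t) ∧
      (∀ t ∈ Set.Icc (-τ) t₁, 0 < X t ∧ 0 < Y t ∧ Y t ≤ M) := by
  rintro ⟨X, Y, hinit, hode, hbnd⟩
  obtain ⟨hX0, hY0⟩ := hinit 0 ⟨by linarith, le_rfl⟩
  have hbnd₀ : ∀ t ∈ Icc 0 t₁, 0 < X t ∧ 0 < Y t ∧ Y t ≤ M :=
    fun t ht => hbnd t ⟨by linarith [ht.1], ht.2⟩
  have hXK := prey_le_of_hasDerivAt hK hω hD.le hd.le (fun t ht => (hode t ht).1)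
    (hX0 ▸ hX₀K) (fun t ht => (hbnd₀ t ht).2.1)
  have hXlow := delayed_lower_bound_of_history hω.le hτ.le ht₁τ.le hX₀.le
    (fun t ht => (hinit t ht).1) (hX0 ▸ mul_exp_le_prey hr.le hω.le hD.le hd.le
      (fun t ht => (hode t ht).1) (fun t ht => (hbnd₀ t ht).1) hXK (fun t ht => (hbnd₀ t ht).2.1))
  have hM₀ : 0 < M := by
    obtain ⟨-, hY0pos, hY0M⟩ := hbnd₀ 0 ⟨le_rfl, by linarith⟩
    linarith
  have hdelay : ∀ t ∈ Icc 0 t₁, ω₁ * Y (t - τ) / (X (t - τ) + D₁) ≤ a := by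
    intro t ht
    obtain ⟨-, -, hYM⟩ := hbnd (t - τ) ⟨by linarith [ht.1], by linarith [ht.2]⟩
    calc ω₁ * Y (t - τ) / (X (t - τ) + D₁) ≤ ω₁ * M / (X₀ * exp (-ω * (t₁ - τ))) := by
          gcongr
          linarith [hXlow t ht]
      _ = a := by rw [ha, neg_mul, exp_neg]; field_simp
  have ha₀ : 0 < a := by rw [ha]; positivity
  have hblowUp := lt_riccatiBlowUpTime (fun t ht => (hode t ht).2)
    (fun t ht => (hbnd₀ t ht).2.1) hdelay ha₀ (hY0 ▸ hca)
  rw [hY0] at hblowUp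
  exact hblowUp.not_ge ht₁

/-- Theorem 2.1 (blow-up in the delayed model): if `Y` were a solution of the
delayed system bounded by `M` on `[−τ, t₁]`, with `a = ω₁ M e^{ω(t₁−τ)}/X₀`,
`c Y₀ > a` and `t₁ ≥ (1/a) ln(c Y₀/(c Y₀ − a))`, we get a contradiction; hence
solutions with large data blow up in finite time. -/
theorem stmt_7 (r K ω D d c ω₁ D₁ τ X₀ Y₀ t₁ M a : ℝ)
    (hr : 0 < r) (hK : 0 < K) (hω : 0 < ω) (hD : 0 < D) (hd : 0 < d)
    (hc : 0 < c) (hω₁ : 0 < ω₁) (hD₁ : 0 < D₁) (hτ : 0 < τ)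
    (hX₀ : 0 < X₀) (hY₀ : 0 < Y₀) (hX₀K : X₀ ≤ K)
    (ht₁τ : τ < t₁) (hM : Y₀ ≤ M)
    (ha : a = ω₁ * M * Real.exp (ω * (t₁ - τ)) / X₀)
    (hca : a < c * Y₀)
    (ht₁ : (1 / a) * Real.log (c * Y₀ / (c * Y₀ - a)) ≤ t₁) :
    ¬ ∃ X Y : ℝ → ℝ,
      (∀ t ∈ Set.Icc (-τ) (0 : ℝ), X t = X₀ ∧ Y t = Y₀) ∧
      (∀ t ∈ Set.Icc (0 : ℝ) t₁,
        HasDerivAt X (r * X t * (1 - X t / K) - ω * X t * Y t / (D + d * X t + Y t)) t ∧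
        HasDerivAt Y (Y t * (c * Y t - ω₁ * Y (t - τ) / (X (t - τ) + D₁))) t) ∧
      (∀ t ∈ Set.Icc (-τ) t₁, 0 < X t ∧ 0 < Y t ∧ Y t ≤ M) :=
  stmt_7_general r K ω D d c ω₁ D₁ τ X₀ Y₀ t₁ M a hr hK hω hD hd hω₁ hD₁ hτ hX₀ hX₀K ht₁τ ha hca ht₁
end

section
/- (Corollary 2.2, blow-up in the delayed model with subquadratic predator growth.) Let r, K, ω, D, d, c, ω₁, D₁ be positive reals, τ > 0, 1 < m < 2, and let X₀, Y₀ be positive with X₀ ≤ K. Fix t₁ > τ and M ≥ Y₀, set a = ω₁·M·e^{ω(t₁−τ)}/X₀, and assume c·Y₀^{m−1} > 2a and t₁ ≥ 2·Y₀^{1−m}/(c·(m−1)). Then there exist no differentiable functions X, Y : ℝ → ℝ satisfying: (i) X(t) = X₀ and Y(t) = Y₀ for all t ∈ [−τ, 0]; (ii) for all t ∈ [0, t₁], X'(t) = r·X(t)·(1 − X(t)/K) − ω·X(t)·Y(t)/(D + d·X(t) + Y(t)) and Y'(t) = c·Y(t)^m − ω₁·Y(t)·Y(t−τ)/(X(t−τ)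 + D₁); (iii) X(t) > 0 for all t ∈ [−τ, t₁] and 0 < Y(t) ≤ M for all t ∈ [−τ, t₁]. Hence the modified delayed model, in which the cY² term is replaced by cY^m with 1 < m < 2, still blows up in finite time for sufficiently large initial data. -/
/-!
Along a bounded positive solution the prey can decay at most like `X₀ e^{-ωt}`, since its
logistic term is nonnegative below `K` and the predation term is at most `ωX`. Hence the
delayed prey stays above `X₀ e^{-ω(t₁-τ)}`, so the delayed interaction term is at most `aY`.
Once `cY^{m-1} > 2a` at time `0`, this keeps `Y` above `Y₀` and gives `Y' ≥ (c/2) Y^m`, and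
then `Y^{1-m} + (c/2)(m-1)t` is nonincreasing, which forces blow-up before `t₁`.
-/

open Set Real

theorem le_of_hasDerivAt_neg_of_eq_s8 {f f' : ℝ → ℝ} {B T : ℝ}
    (hf : ∀ t ∈ Icc 0 T, HasDerivAt f (f' t) t) (h0 : f 0 ≤ B)
    (hB : ∀ t ∈ Icc 0 T, f t = B → f' t < 0) :
    ∀ t ∈ Icc 0 T, f t ≤ B := fun _ ht =>
  image_le_of_deriv_right_lt_deriv_boundary (B := fun _ => B)
    (fun t ht => (hf t ht).continuousAt.continuousWithinAt)
    (fun t ht => (hf t (Ico_subset_Icc_self ht)).hasDerivWithinAt) h0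
    (fun _ => hasDerivAt_const _ _) (fun t ht => hB t (Ico_subset_Icc_self ht)) ht

theorem le_of_hasDerivAt_pos_of_eq {f f' : ℝ → ℝ} {B T : ℝ}
    (hf : ∀ t ∈ Icc 0 T, HasDerivAt f (f' t) t) (h0 : B ≤ f 0)
    (hB : ∀ t ∈ Icc 0 T, f t = B → 0 < f' t) :
    ∀ t ∈ Icc 0 T, B ≤ f t := fun t ht =>
  neg_le_neg_iff.mp <| le_of_hasDerivAt_neg_of_eq_s8 (fun t ht => (hf t ht).neg)
    (neg_le_neg h0) (fun t ht h => neg_neg_of_pos (hB t ht (neg_inj.mp h))) t ht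

theorem le_mul_exp_of_neg_mul_le_deriv {f f' : ℝ → ℝ} {ω T : ℝ}
    (hf : ∀ t ∈ Icc 0 T, HasDerivAt f (f' t) t) (hf' : ∀ t ∈ Icc 0 T, -(ω * f t) ≤ f' t) :
    ∀ t ∈ Icc 0 T, f 0 ≤ f t * exp (ω * t) := by
  have hg : ∀ t ∈ Icc 0 T,
      HasDerivAt (fun s => f s * exp (ω * s)) ((f' t + ω * f t) * exp (ω * t)) t := fun t ht =>
    ((hf t ht).mul ((hasDerivAt_id t).const_mul ω).exp).congr_deriv (by simp only [id]; ring)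
  have hmono : MonotoneOn (fun s => f s * exp (ω * s)) (Icc 0 T) :=
    monotoneOn_of_hasDerivWithinAt_nonneg (convex_Icc 0 T)
      (fun t ht => (hg t ht).continuousAt.continuousWithinAt)
      (fun t ht => (hg t (interior_subset ht)).hasDerivWithinAt)
      (fun t ht => mul_nonneg (by linarith [hf' t (interior_subset ht)]) (exp_pos _).le)
  intro t ht
  simpa using hmono ⟨le_rfl, ht.1.trans ht.2⟩ ht ht.1

theorem lt_rpow_div_of_mul_rpow_le_deriv {y y' : ℝ → ℝ} {k m T : ℝ} (hk : 0 < k) (hm : 1 < m)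
    (hT : 0 ≤ T) (hy : ∀ t ∈ Icc 0 T, HasDerivAt y (y' t) t) (hpos : ∀ t ∈ Icc 0 T, 0 < y t)
    (hgrowth : ∀ t ∈ Icc 0 T, k * y t ^ m ≤ y' t) :
    T < y 0 ^ (1 - m) / (k * (m - 1)) := by
  set W : ℝ → ℝ := fun t => y t ^ (1 - m) + k * (m - 1) * t
  have hW : ∀ t ∈ Icc 0 T, HasDerivAt W ((m - 1) * (k - y' t * y t ^ (-m))) t := by
    intro t ht
    refine (((hy t ht).rpow_const (p := 1 - m) (Or.inl (hpos t ht).ne')).add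
      ((hasDerivAt_id t).const_mul (k * (m - 1)))).congr_deriv ?_
    rw [show 1 - m - 1 = -m by ring]
    ring
  have hanti : AntitoneOn W (Icc 0 T) := by
    refine antitoneOn_of_hasDerivWithinAt_nonpos (convex_Icc 0 T)
      (fun t ht => (hW t ht).continuousAt.continuousWithinAt)
      (fun t ht => (hW t (interior_subset ht)).hasDerivWithinAt) fun t ht => ?_
    have ht := interior_subset ht
    have hk_le : k ≤ y' t * y t ^ (-m) :=
      calc k = k * y t ^ m * y t ^ (-m) := by
            rw [mul_assoc, ← rpow_add (hpos t ht), add_neg_cancel, rpow_zero, mul_one]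
        _ ≤ y' t * y t ^ (-m) :=
            mul_le_mul_of_nonneg_right (hgrowth t ht) (rpow_pos_of_pos (hpos t ht) _).le
    nlinarith
  have hWT := hanti ⟨le_rfl, hT⟩ ⟨hT, le_rfl⟩ hT
  have hyT := rpow_pos_of_pos (hpos T ⟨hT, le_rfl⟩) (1 - m)
  rw [lt_div_iff₀ (mul_pos hk (sub_pos.mpr hm))]
  simp only [W] at hWT
  linarith

theorem prey_le_mul_exp {r K ω D d T : ℝ} {X Y : ℝ → ℝ} (hr : 0 < r) (hK : 0 < K) (hω : 0 < ω)
    (hD : 0 < D) (hd : 0 < d)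
    (hX : ∀ t ∈ Icc 0 T,
      HasDerivAt X (r * X t * (1 - X t / K) - ω * X t * Y t / (D + d * X t + Y t)) t)
    (hXpos : ∀ t ∈ Icc 0 T, 0 < X t) (hYpos : ∀ t ∈ Icc 0 T, 0 < Y t) (hX0 : X 0 ≤ K) :
    ∀ t ∈ Icc 0 T, X 0 ≤ X t * exp (ω * t) := by
  have hden : ∀ t ∈ Icc 0 T, 0 < D + d * X t + Y t := fun t ht => by
    have := hXpos t ht; have := hYpos t ht; positivity
  have hpredation : ∀ t ∈ Icc 0 T, 0 < ω * X t * Y t / (D + d * X t + Y t) := fun t ht => by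
    have := hXpos t ht; have := hYpos t ht; have := hden t ht; positivity
  have hXK : ∀ t ∈ Icc 0 T, X t ≤ K := le_of_hasDerivAt_neg_of_eq_s8 hX hX0 fun t ht hXt => by
    rw [hXt, div_self hK.ne', sub_self, mul_zero, zero_sub, neg_neg_iff_pos, ← hXt]
    exact hpredation t ht
  refine le_mul_exp_of_neg_mul_le_deriv hX fun t ht => ?_
  have hlogistic : 0 ≤ r * X t * (1 - X t / K) :=
    mul_nonneg (mul_pos hr (hXpos t ht)).le (sub_nonneg.mpr ((div_le_one hK).mpr (hXK t ht)))
  have hpredation_le : ω * X t * Y t / (D + d * X t + Y t) ≤ ω * X t := by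
    rw [div_le_iff₀ (hden t ht)]
    have := mul_pos hd (hXpos t ht)
    exact mul_le_mul_of_nonneg_left (by linarith) (mul_pos hω (hXpos t ht)).le
  linarith

theorem le_delayed_mul_exp {X : ℝ → ℝ} {X₀ ω τ t₁ : ℝ} (hω : 0 ≤ ω) (hτ : 0 ≤ τ) (hτt₁ : τ ≤ t₁)
    (hX₀ : 0 ≤ X₀) (hinit : ∀ t ∈ Icc (-τ) 0, X t = X₀) (hpos : ∀ t ∈ Icc 0 t₁, 0 < X t)
    (hgrowth : ∀ t ∈ Icc 0 t₁, X₀ ≤ X t * exp (ω * t)) :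
    ∀ t ∈ Icc 0 t₁, X₀ ≤ X (t - τ) * exp (ω * (t₁ - τ)) := by
  intro t ht
  rcases le_or_gt (t - τ) 0 with hpast | hpresent
  · rw [hinit (t - τ) ⟨by linarith [ht.1], hpast⟩]
    exact le_mul_of_one_le_right hX₀ (one_le_exp (mul_nonneg hω (by linarith)))
  · have hmem : t - τ ∈ Icc 0 t₁ := ⟨hpresent.le, by linarith [ht.2]⟩
    calc X₀ ≤ X (t - τ) * exp (ω * (t - τ)) := hgrowth _ hmem
      _ ≤ X (t - τ) * exp (ω * (t₁ - τ)) := by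
        gcongr
        · exact (hpos _ hmem).le
        · linarith [ht.2]

theorem delay_term_le {ω₁ D₁ M E X₀ y y_delay x_delay : ℝ} (hω₁ : 0 ≤ ω₁) (hD₁ : 0 ≤ D₁)
    (hy : 0 ≤ y) (hy_delay : 0 ≤ y_delay) (hM : y_delay ≤ M) (hX₀ : 0 < X₀) (hE : 0 < E)
    (hx_delay : X₀ ≤ x_delay * E) :
    ω₁ * y * y_delay / (x_delay + D₁) ≤ ω₁ * M * E / X₀ * y := by
  have hx : X₀ / E ≤ x_delay + D₁ := by rw [div_le_iff₀ hE]; nlinarith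
  calc ω₁ * y * y_delay / (x_delay + D₁) ≤ ω₁ * y * M / (X₀ / E) :=
        div_le_div₀ (mul_nonneg (mul_nonneg hω₁ hy) (hy_delay.trans hM)) (by gcongr)
          (by positivity) hx
    _ = ω₁ * M * E / X₀ * y := by field_simp

theorem half_mul_rpow_le_sub {c m a Y₀ y δ : ℝ} (hc : 0 ≤ c) (hm : 1 ≤ m) (hY₀ : 0 < Y₀)
    (hy : Y₀ ≤ y) (hca : 2 * a < c * Y₀ ^ (m - 1)) (hδ : δ ≤ a * y) :
    c / 2 * y ^ m ≤ c * y ^ m - δ := by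
  have hy0 : 0 < y := hY₀.trans_le hy
  have hpow : Y₀ ^ (m - 1) ≤ y ^ (m - 1) := rpow_le_rpow hY₀.le hy (by linarith)
  have hsplit : y ^ m = y ^ (m - 1) * y := by
    rw [← rpow_add_one hy0.ne', sub_add_cancel]
  have : a * y ≤ c / 2 * y ^ m := by
    rw [hsplit, ← mul_assoc]
    exact mul_le_mul_of_nonneg_right (by nlinarith) hy0.le
  linarith

theorem stmt_8_general (r K ω D d c ω₁ D₁ τ m X₀ Y₀ t₁ M a : ℝ)
    (hr : 0 < r) (hK : 0 < K) (hω : 0 < ω) (hD : 0 < D) (hd : 0 < d)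
    (hc : 0 < c) (hω₁ : 0 < ω₁) (hD₁ : 0 < D₁) (hτ : 0 < τ)
    (hm1 : 1 < m)
    (hX₀ : 0 < X₀) (hY₀ : 0 < Y₀) (hX₀K : X₀ ≤ K)
    (ht₁τ : τ < t₁)
    (ha : a = ω₁ * M * Real.exp (ω * (t₁ - τ)) / X₀)
    (hca : 2 * a < c * Y₀ ^ (m - 1))
    (ht₁ : 2 * Y₀ ^ (1 - m) / (c * (m - 1)) ≤ t₁) :
    ¬ ∃ X Y : ℝ → ℝ,
      (∀ t ∈ Set.Icc (-τ) (0 : ℝ), X t = X₀ ∧ Y t = Y₀) ∧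
      (∀ t ∈ Set.Icc (0 : ℝ) t₁,
        HasDerivAt X (r * X t * (1 - X t / K) - ω * X t * Y t / (D + d * X t + Y t)) t ∧
        HasDerivAt Y (c * Y t ^ m - ω₁ * Y t * Y (t - τ) / (X (t - τ) + D₁)) t) ∧
      (∀ t ∈ Set.Icc (-τ) t₁, 0 < X t ∧ 0 < Y t ∧ Y t ≤ M) := by
  rintro ⟨X, Y, hinit, hode, hbound⟩
  have ht₁0 : 0 ≤ t₁ := hτ.le.trans ht₁τ.le
  obtain ⟨hX0, hY0⟩ := hinit 0 ⟨by linarith, le_rfl⟩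
  have hsub : Icc 0 t₁ ⊆ Icc (-τ) t₁ := Icc_subset_Icc (by linarith) le_rfl
  have hdelayed : ∀ t ∈ Icc 0 t₁, t - τ ∈ Icc (-τ) t₁ := fun t ht =>
    ⟨by linarith [ht.1], by linarith [ht.2]⟩
  have hXpos : ∀ t ∈ Icc 0 t₁, 0 < X t := fun t ht => (hbound t (hsub ht)).1
  have hYpos : ∀ t ∈ Icc 0 t₁, 0 < Y t := fun t ht => (hbound t (hsub ht)).2.1
  have hprey : ∀ t ∈ Icc 0 t₁, X₀ ≤ X (t - τ) * exp (ω * (t₁ - τ)) :=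
    le_delayed_mul_exp hω.le hτ.le ht₁τ.le hX₀.le (fun t ht => (hinit t ht).1) hXpos <|
      hX0 ▸ prey_le_mul_exp hr hK hω hD hd (fun t ht => (hode t ht).1) hXpos hYpos (hX0 ▸ hX₀K)
  have hgrowth : ∀ t ∈ Icc 0 t₁, Y₀ ≤ Y t →
      c / 2 * Y t ^ m ≤ c * Y t ^ m - ω₁ * Y t * Y (t - τ) / (X (t - τ) + D₁) :=
    fun t ht hYt => half_mul_rpow_le_sub hc.le hm1.le hY₀ hYt hca <| ha ▸
      delay_term_le hω₁.le hD₁.le (hYpos t ht).le (hbound _ (hdelayed t ht)).2.1.le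
        (hbound _ (hdelayed t ht)).2.2 hX₀ (exp_pos _) (hprey t ht)
  have hY : ∀ t ∈ Icc 0 t₁, Y₀ ≤ Y t :=
    le_of_hasDerivAt_pos_of_eq (fun t ht => (hode t ht).2) hY0.ge fun t ht hYt =>
      (mul_pos (half_pos hc) (rpow_pos_of_pos hY₀ m)).trans_le (hYt ▸ hgrowth t ht hYt.ge)
  have hblowup := lt_rpow_div_of_mul_rpow_le_deriv (half_pos hc) hm1 ht₁0
    (fun t ht => (hode t ht).2) hYpos (fun t ht => hgrowth t ht (hY t ht))
  have hblowup_time : Y₀ ^ (1 - m) / (c / 2 * (m - 1)) = 2 * Y₀ ^ (1 - m) / (c * (m - 1)) := by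
    field_simp
  rw [hY0, hblowup_time] at hblowup
  linarith

/-- Corollary 2.2 (blow-up for the delayed model with subquadratic predator
growth `c Y^m`, `1 < m < 2`): under the stated largeness conditions no bounded
positive solution exists on `[−τ, t₁]`. -/
theorem stmt_8 (r K ω D d c ω₁ D₁ τ m X₀ Y₀ t₁ M a : ℝ)
    (hr : 0 < r) (hK : 0 < K) (hω : 0 < ω) (hD : 0 < D) (hd : 0 < d)
    (hc : 0 < c) (hω₁ : 0 < ω₁) (hD₁ : 0 < D₁) (hτ : 0 < τ)
    (hm1 : 1 < m) (hm2 : m < 2)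
    (hX₀ : 0 < X₀) (hY₀ : 0 < Y₀) (hX₀K : X₀ ≤ K)
    (ht₁τ : τ < t₁) (hM : Y₀ ≤ M)
    (ha : a = ω₁ * M * Real.exp (ω * (t₁ - τ)) / X₀)
    (hca : 2 * a < c * Y₀ ^ (m - 1))
    (ht₁ : 2 * Y₀ ^ (1 - m) / (c * (m - 1)) ≤ t₁) :
    ¬ ∃ X Y : ℝ → ℝ,
      (∀ t ∈ Set.Icc (-τ) (0 : ℝ), X t = X₀ ∧ Y t = Y₀) ∧
      (∀ t ∈ Set.Icc (0 : ℝ) t₁,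
        HasDerivAt X (r * X t * (1 - X t / K) - ω * X t * Y t / (D + d * X t + Y t)) t ∧
        HasDerivAt Y (c * Y t ^ m - ω₁ * Y t * Y (t - τ) / (X (t - τ) + D₁)) t) ∧
      (∀ t ∈ Set.Icc (-τ) t₁, 0 < X t ∧ 0 < Y t ∧ Y t ≤ M) :=
  stmt_8_general r K ω D d c ω₁ D₁ τ m X₀ Y₀ t₁ M a hr hK hω hD hd hc hω₁ hD₁ hτ hm1 hX₀ hY₀ hX₀K
    ht₁τ ha hca ht₁
end
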